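/- arXiv:1712.10123 — 2 statements merged into one kernel-verified Lean document; each statement's English description precedes it below -/
import Mathlib

section
/- In a finite semidistributive lattice, for any cover relation x ⋖ y, the maximal element m with m ∧ y = x equals κ(j), where j is the minimal element with x ∨ j = y and κ(j) = max{ z : z ≥ j_*, z ≱ j } with j_* the unique element covered by j. -/
/-!
Since `j` is least with `x ⊔ j = y`, every element strictly below `j` (in particular `j⁎`)
lies below `x`, and `j ≰ x`. Hence `m ≥ x ≥ j⁎` and `m` avoids `j`, so `m ≤ κ(j)`; conversely
`κ(j) ≥ x` and `κ(j) ≱ y`, so the cover `x ⋖ y` forces `κ(j) ⊓ y = x`, whence `κ(j) ≤ m`.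
-/

section Lattice

variable {L : Type*} [Lattice L] {x y z j : L}

theorem CovBy.inf_eq_of_le_of_not_le (hxy : x ⋖ y) (hxz : x ≤ z) (hyz : ¬ y ≤ z) :
    z ⊓ y = x :=
  (hxy.eq_or_eq (le_inf hxz hxy.le) inf_le_right).resolve_right
    fun h => hyz (h ▸ inf_le_left)

theorem CovBy.sup_eq_of_le_of_not_le (hxy : x ⋖ y) (hzy : z ≤ y) (hzx : ¬ z ≤ x) :
    x ⊔ z = y :=
  (hxy.eq_or_eq le_sup_left (sup_le hxy.le hzy)).resolve_left
    fun h => hzx (h ▸ le_sup_right)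

theorem not_le_of_isLeast_sup_eq (hxy : x < y) (hj : IsLeast {z | x ⊔ z = y} j) : ¬ j ≤ x :=
  fun h => hxy.ne (by rw [← hj.1, sup_eq_left.mpr h])

theorem le_of_lt_of_isLeast_sup_eq (hxy : x ⋖ y) (hj : IsLeast {z | x ⊔ z = y} j)
    (hzj : z < j) : z ≤ x := by
  by_contra hzx
  have hzy : z ≤ y := hzj.le.trans (hj.1 ▸ le_sup_right)
  exact hzj.not_ge (hj.2 (hxy.sup_eq_of_le_of_not_le hzy hzx))

end Lattice

theorem kappa_of_cover_general {L : Type*} [Lattice L]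
    (x y j jstar m kj : L) (hxy : x ⋖ y)
    (hj : IsLeast {z : L | x ⊔ z = y} j)
    (hjstar : jstar ⋖ j)
    (hm : IsGreatest {z : L | z ⊓ y = x} m)
    (hkj : IsGreatest {z : L | jstar ≤ z ∧ ¬ j ≤ z} kj) :
    m = kj := by
  have hjy : j ≤ y := hj.1 ▸ le_sup_right
  have hjx : ¬ j ≤ x := not_le_of_isLeast_sup_eq hxy.lt hj
  have hjstar_x : jstar ≤ x := le_of_lt_of_isLeast_sup_eq hxy hj hjstar.lt
  have hxm : x ≤ m := hm.1 ▸ inf_le_left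
  apply le_antisymm
  · exact hkj.2 ⟨hjstar_x.trans hxm, fun hjm => hjx (hm.1 ▸ le_inf hjm hjy)⟩
  · exact hm.2 <| hxy.inf_eq_of_le_of_not_le (hkj.2 ⟨hjstar_x, hjx⟩)
      fun hykj => hkj.1.2 (hjy.trans hykj)

/-- In a finite semidistributive lattice, for a cover `x ⋖ y`, the maximal
element `m` with `m ⊓ y = x` equals `κ(j)`, the maximal element above `j⁎` but
not above `j`, where `j` is the minimal element with `x ⊔ j = y` and `j⁎ ⋖ j`
is its unique lower cover. -/
theorem kappa_of_cover {L : Type*} [Lattice L] [Fintype L]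
    (hSD₁ : ∀ x y z : L, x ⊔ y = x ⊔ z → x ⊔ (y ⊓ z) = x ⊔ y)
    (hSD₂ : ∀ x y z : L, x ⊓ y = x ⊓ z → x ⊓ (y ⊔ z) = x ⊓ y)
    (x y j jstar m kj : L) (hxy : x ⋖ y)
    (hj : IsLeast {z : L | x ⊔ z = y} j)
    (hjstar : jstar ⋖ j)
    (hm : IsGreatest {z : L | z ⊓ y = x} m)
    (hkj : IsGreatest {z : L | jstar ≤ z ∧ ¬ j ≤ z} kj) :
    m = kj :=
  kappa_of_cover_general x y j jstar m kj hxy hj hjstar hm hkj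
end

section
/- Every finite extremal semidistributive lattice is trim; i.e., if a finite semidistributive lattice of length n has exactly n join-irreducibles and n meet-irreducibles, then it possesses a maximal chain of left modular elements. -/
/-! In a finite join semidistributive lattice every cover `a ⋖ b` has a least `j` with
`a ⊔ j = b`, and this label is join-irreducible. Along a longest chain `c` the labels of the
successive covers are distinct, so by extremality they are all the join-irreducibles.
If `c k` were not left modular, some cover `a ⋖ b` would satisfy `c k ⊔ a = c k ⊔ b` and
`c k ⊓ a = c k ⊓ b`. Its label is that of a chain cover `c i ⋖ c (i + 1)`. For `i < k` the label
lies below `c k ⊓ b = c k ⊓ a`, hence below `a`, which is absurd; for `i ≥ k` meet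
semidistributivity gives `b ⊓ (c i ⊔ a) = a`, although `b ≤ c k ⊔ a ≤ c i ⊔ a`. -/

def LeftModular {L : Type*} [Lattice L] (x : L) : Prop :=
  ∀ y z : L, y ≤ z → (y ⊔ x) ⊓ z = y ⊔ (x ⊓ z)

def JoinSemidistributive (L : Type*) [Lattice L] : Prop :=
  ∀ x y z : L, x ⊔ y = x ⊔ z → x ⊔ (y ⊓ z) = x ⊔ y

def MeetSemidistributive (L : Type*) [Lattice L] : Prop :=
  ∀ x y z : L, x ⊓ y = x ⊓ z → x ⊓ (y ⊔ z) = x ⊓ y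

section

variable {L : Type*} [Lattice L] {a b a' b' j x : L}

lemma not_le_of_lt_of_sup_eq (hab : a < b) (hj : a ⊔ j = b) : ¬ j ≤ a := fun h =>
  hab.ne (by rw [← hj, sup_eq_left.2 h])

/-- Any minimal solution of `a ⊔ w = b` is the least one: if `w` is another, then so is
`j ⊓ w` by semidistributivity. -/
lemma JoinSemidistributive.exists_isLeast_sup_eq [Finite L] (hSD : JoinSemidistributive L)
    (hab : a ≤ b) : ∃ j, IsLeast {w | a ⊔ w = b} j := by
  obtain ⟨j, hj, hmin⟩ :=
    exists_minimal_of_wellFoundedLT (fun w => a ⊔ w = b) ⟨b, sup_eq_right.2 hab⟩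
  refine ⟨j, hj, fun w hw => ?_⟩
  have hjw : a ⊔ (j ⊓ w) = b := (hSD a j w (hj.trans hw.symm)).trans hj
  exact inf_eq_left.1 (le_antisymm inf_le_left (hmin hjw inf_le_left))

lemma CovBy.supIrred_of_isLeast (hab : a ⋖ b) (hj : IsLeast {w | a ⊔ w = b} j) :
    SupIrred j := by
  have hlt {u : L} (hu : u < j) : a ⊔ u = a := by
    refine (hab.eq_or_eq le_sup_left (sup_le hab.le (hu.le.trans ?_))).resolve_right
      fun h => (hj.2 h).not_gt hu
    exact hj.1 ▸ le_sup_right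
  refine ⟨fun hmin => not_le_of_lt_of_sup_eq hab.lt hj.1 ((hmin inf_le_right).trans inf_le_left),
    fun u v huv => ?_⟩
  by_contra! h
  have hu : a ⊔ u = a := hlt (lt_of_le_of_ne (huv ▸ le_sup_left) h.1)
  have hv : a ⊔ v = a := hlt (lt_of_le_of_ne (huv ▸ le_sup_right) h.2)
  exact hab.lt.ne (by rw [← hj.1, ← huv, ← sup_assoc, hu, hv])

lemma CovBy.inf_le_of_isLeast (hab' : a' ⋖ b') (hj' : IsLeast {w | a' ⊔ w = b'} j)
    (hja : ¬ j ≤ a) : a ⊓ j ≤ a' := by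
  refine sup_eq_left.1 ((hab'.eq_or_eq le_sup_left (sup_le hab'.le ?_)).resolve_right fun h => ?_)
  · exact inf_le_right.trans (hj'.1 ▸ le_sup_right)
  · exact hja ((hj'.2 h).trans inf_le_left)

/-- Covers with the same least join-label `j` agree on `j`, i.e. `j ⊓ a = j ⊓ a'`; meet
semidistributivity then keeps `j` out of `a ⊔ a'`. -/
lemma MeetSemidistributive.inf_sup_eq_of_isLeast (hSD : MeetSemidistributive L)
    (hab : a ⋖ b) (hab' : a' ⋖ b')
    (hj : IsLeast {w | a ⊔ w = b} j) (hj' : IsLeast {w | a' ⊔ w = b'} j) :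
    b' ⊓ (a ⊔ a') = a' := by
  have hja := not_le_of_lt_of_sup_eq hab.lt hj.1
  have hja' := not_le_of_lt_of_sup_eq hab'.lt hj'.1
  have heq : j ⊓ a = j ⊓ a' := by
    rw [inf_comm j, inf_comm j]
    exact le_antisymm (le_inf (hab'.inf_le_of_isLeast hj' hja) inf_le_right)
      (le_inf (hab.inf_le_of_isLeast hj hja') inf_le_right)
  refine (hab'.eq_or_eq (le_inf hab'.le le_sup_right) inf_le_left).resolve_right fun h => hja ?_
  calc j = j ⊓ (a ⊔ a') := (inf_eq_left.2 ((hj'.1 ▸ le_sup_right).trans (inf_eq_left.1 h))).symm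
    _ = j ⊓ a := hSD j a a' heq
    _ ≤ a := inf_le_right

/-- A failure of left modularity at `y ≤ z` leaves room for a cover in the interval
`[y ⊔ x ⊓ z, (y ⊔ x) ⊓ z]`, and `x` cannot tell its two ends apart. -/
lemma leftModular_of_forall_covBy [Finite L]
    (h : ∀ a b : L, a ⋖ b → x ⊔ a = x ⊔ b → x ⊓ a ≠ x ⊓ b) : LeftModular x := by
  intro y z hyz
  have hle : y ⊔ x ⊓ z ≤ (y ⊔ x) ⊓ z :=
    sup_le (le_inf le_sup_left hyz) (le_inf (inf_le_left.trans le_sup_right) inf_le_right)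
  refine (hle.lt_or_eq.resolve_left fun hlt => ?_).symm
  obtain ⟨t, hAt, htB⟩ := exists_covBy_le_of_lt hlt
  refine h _ _ hAt (le_antisymm (sup_le_sup_left hAt.le x) (sup_le le_sup_left ?_))
    (le_antisymm (inf_le_inf_left x hAt.le) (le_inf inf_le_left ?_))
  · calc t ≤ y ⊔ x := htB.trans inf_le_left
      _ ≤ x ⊔ (y ⊔ x ⊓ z) := sup_le (le_sup_left.trans le_sup_right) le_sup_left
  · exact (inf_le_inf_left x (htB.trans inf_le_right)).trans le_sup_right

lemma StrictMono.covBy_of_length_le {α : Type*} [Preorder α] {n : ℕ} {c : Fin (n + 1) → α}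
    (hc : StrictMono c) (hmax : ∀ (m : ℕ) (d : Fin (m + 1) → α), StrictMono d → m ≤ n)
    (i : Fin n) : c i.castSucc ⋖ c i.succ := by
  refine ⟨hc i.castSucc_lt_succ, fun w hw₁ hw₂ => ?_⟩
  exact n.lt_succ_self.not_ge
    (hmax _ _ (LTSeries.strictMono ((LTSeries.mk n c hc).insertNth i w hw₁ hw₂)))

lemma StrictMono.le_apply_iff_of_isLeast {n : ℕ} {c : Fin (n + 1) → L} (hc : StrictMono c)
    {i : Fin n} (hj : IsLeast {w | c i.castSucc ⊔ w = c i.succ} j) (k : Fin (n + 1)) :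
    j ≤ c k ↔ i.castSucc < k := by
  refine ⟨fun h => lt_of_not_ge fun hk => ?_, fun hk => ?_⟩
  · exact not_le_of_lt_of_sup_eq (hc i.castSucc_lt_succ) hj.1 (h.trans (hc.monotone hk))
  · exact (hj.1 ▸ le_sup_right).trans (hc.monotone (Fin.castSucc_lt_iff_succ_le.1 hk))

lemma StrictMono.injective_of_isLeast {n : ℕ} {c : Fin (n + 1) → L} (hc : StrictMono c)
    {j : Fin n → L} (hj : ∀ i, IsLeast {w | c i.castSucc ⊔ w = c i.succ} (j i)) :
    Function.Injective j := by
  intro i i' h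
  have hle {i i' : Fin n} (h : j i = j i') : i' ≤ i :=
    Fin.castSucc_lt_succ_iff.1 <|
      (hc.le_apply_iff_of_isLeast (hj i') _).1 (h ▸ (hj i).1 ▸ le_sup_right)
  exact le_antisymm (hle h.symm) (hle h)

end

theorem extremal_semidistributive_is_trim_general {L : Type*} [Lattice L] [Fintype L]
    (hSD₁ : ∀ x y z : L, x ⊔ y = x ⊔ z → x ⊔ (y ⊓ z) = x ⊔ y)
    (hSD₂ : ∀ x y z : L, x ⊓ y = x ⊓ z → x ⊓ (y ⊔ z) = x ⊓ y)
    (n : ℕ)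
    (hchain : ∃ c : Fin (n + 1) → L, StrictMono c)
    (hmax : ∀ (m : ℕ) (c : Fin (m + 1) → L), StrictMono c → m ≤ n)
    (hJ : Nat.card {a : L // SupIrred a} = n) :
    ∃ c : Fin (n + 1) → L, StrictMono c ∧ ∀ i, LeftModular (c i) := by
  obtain ⟨c, hc⟩ := hchain
  have hcov := hc.covBy_of_length_le hmax
  choose j hj using fun i => JoinSemidistributive.exists_isLeast_sup_eq hSD₁ (hcov i).le
  let f (i : Fin n) : {x : L // SupIrred x} := ⟨j i, (hcov i).supIrred_of_isLeast (hj i)⟩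
  have hf : f.Bijective := Function.Injective.bijective_of_nat_card_le
    (fun i i' h => hc.injective_of_isLeast hj (congrArg Subtype.val h)) (by simp [hJ])
  refine ⟨c, hc, fun k => leftModular_of_forall_covBy fun a b hab hsup hinf => ?_⟩
  obtain ⟨x, hx⟩ := JoinSemidistributive.exists_isLeast_sup_eq hSD₁ hab.le
  obtain ⟨i, hi⟩ := hf.2 ⟨x, hab.supIrred_of_isLeast hx⟩
  obtain rfl : j i = x := congrArg Subtype.val hi
  by_cases hik : i.castSucc < k
  · have hjk : j i ≤ c k ⊓ b :=
      le_inf ((hc.le_apply_iff_of_isLeast (hj i) k).2 hik) (hx.1 ▸ le_sup_right)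
    exact not_le_of_lt_of_sup_eq hab.lt hx.1 ((hinf ▸ hjk).trans inf_le_right)
  · have hlabel : b ⊓ (c i.castSucc ⊔ a) = a :=
      MeetSemidistributive.inf_sup_eq_of_isLeast hSD₂ (hcov i) hab (hj i) hx
    have hb : b ≤ c i.castSucc ⊔ a := calc
      b ≤ c k ⊔ b := le_sup_right
      _ = c k ⊔ a := hsup.symm
      _ ≤ c i.castSucc ⊔ a := sup_le_sup_right (hc.monotone (not_lt.1 hik)) a
    exact hab.lt.ne' (by rw [← hlabel, inf_eq_left.2 hb])

/-- Every finite extremal semidistributive lattice is trim: if a finite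
semidistributive lattice of length `n` has exactly `n` join-irreducibles and
exactly `n` meet-irreducibles, then it possesses a maximal(-length) chain all
of whose elements are left modular. -/
theorem extremal_semidistributive_is_trim {L : Type*} [Lattice L] [Fintype L]
    (hSD₁ : ∀ x y z : L, x ⊔ y = x ⊔ z → x ⊔ (y ⊓ z) = x ⊔ y)
    (hSD₂ : ∀ x y z : L, x ⊓ y = x ⊓ z → x ⊓ (y ⊔ z) = x ⊓ y)
    (n : ℕ)
    (hchain : ∃ c : Fin (n + 1) → L, StrictMono c)
    (hmax : ∀ (m : ℕ) (c : Fin (m + 1) → L), StrictMono c → m ≤ n)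
    (hJ : Nat.card {a : L // SupIrred a} = n)
    (hM : Nat.card {a : L // InfIrred a} = n) :
    ∃ c : Fin (n + 1) → L, StrictMono c ∧ ∀ i, LeftModular (c i) :=
  extremal_semidistributive_is_trim_general hSD₁ hSD₂ n hchain hmax hJ
end
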